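/- Let L be a real vector space with a vector preorder ≤ (a preorder consistent with addition and scalar multiplication: X ≤ Y implies X + Z ≤ Y + Z for all Z ∈ L, and 0 ≤ X implies 0 ≤ cX for all c ≥ 0), let M ⊆ L be a linear subspace, and let C ⊆ L be a linear subspace with M ⊆ C that is exhaustive (for every X ∈ L there exists X₀ ∈ C with X₀ ≥ X). Let H : C → ℝ be convex and satisfy (P1') H(X + m) = H(X) + H(m) for all X ∈ C, m ∈ M; (P2') H(0) = 0 and H(X) ≥ 0 for all X ∈ C with X ≥ 0; (P3') inf{H(X₀) : X₀ ∈ C, X₀ ≥ X} > −∞ for all X ∈ L. Let L'₊ denote the set of monotone ℝ-linear functionals μ : L → ℝ, and set H*(μ) := sup_{X ∈ C} (μ(X) − H(X)) ∈ [0, ∞] and R_Max(X) := inf{H(X₀) : X₀ ∈ C, X₀ ≥ X} for X ∈ L. Then: (a) R_Max(X) = max_{μ ∈ L'₊} (μ(X) − H*(μ)) for all X ∈ L, the maximum being attained; (b) H*(μ) = sup_{X ∈ L} (μ(X) − R_Max(X)) for all μ ∈ L'₊; (c) if μ ∈ L'₊ satisfies H*(μ) < ∞, then μ(m) = H(m)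 for all m ∈ M. -/

import Mathlib

/-! `R_Max` is the largest monotone function lying below `H` on `C`; it is real-valued, monotone
and convex. A real-valued convex function on a vector space has an algebraic subgradient at every
point, and when the function is monotone so is every such subgradient. Because `R_Max ≤ H` on `C`
while every monotone `μ` satisfies `μ X - R_Max X = sup {μ X - H X₀ | X₀ ∈ C, X₀ ≥ X} ≤ H*(μ)`,
the conjugates of `H` and `R_Max` agree at monotone `μ`, which is (b); a monotone subgradient of
`R_Max` at `X` attains the supremum in (b) at `X`, which gives (a). For (c), `μ - H` is additive
on `M` and bounded above by `H*(μ) < ∞`, hence zero. -/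

/-- The maximal risk measure `R_Max(X) = inf {H X₀ | X₀ ∈ C, X₀ ≥ X}` on a
preordered vector space. -/
noncomputable def RMaxL {L : Type*} [Preorder L] (C : Set L) (H : L → ℝ) (X : L) : ℝ :=
  sInf {y : ℝ | ∃ X₀ ∈ C, X ≤ X₀ ∧ H X₀ = y}

/-- The convex dual `H*(μ) = sup_{X ∈ C} (μ X − H X)` of `H` at a linear
functional `μ`, valued in `EReal`. -/
noncomputable def HstarL {L : Type*} [AddCommGroup L] [Module ℝ L]
    (C : Set L) (H : L → ℝ) (μ : L →ₗ[ℝ] ℝ) : EReal :=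
  ⨆ X ∈ C, ((μ X - H X : ℝ) : EReal)

open Set
open scoped Pointwise

theorem AddMonoidHom.eq_zero_of_bddAbove_range {G A : Type*} [AddGroup G] [AddCommGroup A]
    [LinearOrder A] [IsOrderedAddMonoid A] [Archimedean A] (g : G →+ A)
    (h : BddAbove (Set.range g)) : g = 0 := by
  obtain ⟨t, ht⟩ := h
  have nonpos : ∀ x, g x ≤ 0 := by
    intro x
    by_contra! hx
    obtain ⟨n, hn⟩ := Archimedean.arch t hx
    have hle : g ((n + 1) • x) ≤ t := ht ⟨_, rfl⟩
    rw [map_nsmul, succ_nsmul] at hle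
    exact (lt_add_of_le_of_pos hn hx).not_ge hle
  ext x
  exact le_antisymm (nonpos x) (by simpa using nonpos (-x))

theorem posSMulMono_of_smul_nonneg {R L : Type*} [Ring R] [Preorder R] [AddCommGroup L]
    [Module R L] [Preorder L] [AddLeftMono L] (h : ∀ X : L, 0 ≤ X → ∀ c : R, 0 ≤ c → 0 ≤ c • X) :
    PosSMulMono R L where
  smul_le_smul_of_nonneg_left c hc X Y hXY := by
    simpa [smul_sub] using add_le_add_right (h _ (sub_nonneg.2 hXY) c hc) (c • X)

/-- Riesz extension of `(0, r) ↦ r` from `0 × ℝ`, which is nonnegative on the cone spanned by the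
epigraph of `f` translated so that `(x, f x)` sits at the origin. -/
theorem ConvexOn.exists_subgradient {E : Type*} [AddCommGroup E] [Module ℝ E] {f : E → ℝ}
    (hf : ConvexOn ℝ univ f) (x : E) : ∃ φ : E →ₗ[ℝ] ℝ, ∀ y, f x + φ (y - x) ≤ f y := by
  set K : Set (E × ℝ) := {p | f (x + p.1) ≤ f x + p.2}
  have hK : Convex ℝ K := by
    simpa [K, preimage] using hf.convex_epigraph.translate_preimage_right (x, f x)
  have hK0 : (0 : E × ℝ) ∈ K := by simp [K]
  let s := (ConvexCone.hull ℝ K).toPointedCone (ConvexCone.subset_hull hK0)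
  have mem_s : ∀ p, p ∈ s ↔ ∃ r : ℝ, 0 < r ∧ p ∈ r • K := fun p =>
    (ConvexCone.mem_toPointedCone _ p).trans (ConvexCone.mem_hull_of_convex hK)
  let ψ : (E × ℝ) →ₗ.[ℝ] ℝ := (LinearMap.snd ℝ E ℝ).toPMap (LinearMap.range (LinearMap.inr ℝ E ℝ))
  have nonneg : ∀ p : ψ.domain, (p : E × ℝ) ∈ s → 0 ≤ ψ p := by
    rintro ⟨_, r, rfl⟩ hr
    obtain ⟨c, hc, ⟨v, t⟩, hvt, hcvt⟩ := (mem_s _).1 hr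
    simp only [Prod.smul_mk, LinearMap.inr_apply, Prod.mk.injEq, smul_eq_zero, hc.ne',
      false_or] at hcvt
    obtain ⟨rfl, rfl⟩ := hcvt
    simp only [K, mem_ofPred_eq, add_zero, le_add_iff_nonneg_right] at hvt
    simpa [ψ] using mul_nonneg hc.le hvt
  have dense : ∀ p, ∃ q : ψ.domain, (q : E × ℝ) + p ∈ s := by
    rintro ⟨v, r⟩
    refine ⟨⟨(0, f (x + v) - f x - r), ⟨_, rfl⟩⟩, (mem_s _).2 ⟨1, one_pos, ?_⟩⟩
    simp [K]
  obtain ⟨g, hgψ, hgs⟩ := riesz_extension s ψ nonneg dense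
  have hg01 : g (0, 1) = 1 := by simpa [ψ] using hgψ ⟨(0, 1), ⟨1, rfl⟩⟩
  refine ⟨-g.comp (LinearMap.inl ℝ E ℝ), fun y => ?_⟩
  have hy : (y - x, f y - f x) ∈ s := (mem_s _).2 ⟨1, one_pos, by simp [K]⟩
  have hsplit : g (y - x, f y - f x) = g (y - x, 0) + (f y - f x) * g (0, 1) := by
    rw [← smul_eq_mul, ← map_smul, ← map_add]; simp
  have hgy := hgs _ hy
  rw [hsplit, hg01] at hgy
  simp only [LinearMap.neg_apply, LinearMap.comp_apply, LinearMap.inl_apply]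
  linarith

theorem LinearMap.monotone_of_subgradient_of_monotone {L : Type*} [AddCommGroup L] [Module ℝ L]
    [Preorder L] [AddLeftMono L] {f : L → ℝ} (hf : Monotone f) {φ : L →ₗ[ℝ] ℝ} {x : L}
    (hφ : ∀ y, f x + φ (y - x) ≤ f y) : Monotone φ := by
  intro a b hab
  have hle : f (x + (a - b)) ≤ f x := hf (add_le_of_nonpos_right (sub_nonpos.2 hab))
  have := hφ (x + (a - b))
  rw [add_sub_cancel_left, map_sub] at this
  linarith

section RMax

variable {L : Type*} [Preorder L] {C : Set L} {H : L → ℝ} {X X₀ : L}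

theorem RMaxL_le (hbdd : BddBelow {y : ℝ | ∃ X₀ ∈ C, X ≤ X₀ ∧ H X₀ = y}) (hX₀ : X₀ ∈ C)
    (hX : X ≤ X₀) : RMaxL C H X ≤ H X₀ :=
  csInf_le hbdd ⟨X₀, hX₀, hX, rfl⟩

theorem le_RMaxL {a : ℝ} (hexh : ∃ X₀ ∈ C, X ≤ X₀) (h : ∀ X₀ ∈ C, X ≤ X₀ → a ≤ H X₀) :
    a ≤ RMaxL C H X := by
  obtain ⟨X₀, hX₀, hX⟩ := hexh
  refine le_csInf ⟨_, X₀, hX₀, hX, rfl⟩ ?_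
  rintro _ ⟨X₁, hX₁, hX', rfl⟩
  exact h X₁ hX₁ hX'

theorem exists_lt_of_RMaxL_lt {a : ℝ} (hexh : ∃ X₀ ∈ C, X ≤ X₀) (h : RMaxL C H X < a) :
    ∃ X₀ ∈ C, X ≤ X₀ ∧ H X₀ < a := by
  obtain ⟨X₁, hX₁, hX⟩ := hexh
  obtain ⟨_, ⟨X₀, hX₀, hX', rfl⟩, hlt⟩ := exists_lt_of_csInf_lt (by exact ⟨_, X₁, hX₁, hX, rfl⟩) h
  exact ⟨X₀, hX₀, hX', hlt⟩

theorem monotone_RMaxL (hexh : ∀ X : L, ∃ X₀ ∈ C, X ≤ X₀)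
    (hbdd : ∀ X : L, BddBelow {y : ℝ | ∃ X₀ ∈ C, X ≤ X₀ ∧ H X₀ = y}) :
    Monotone (RMaxL C H) := fun _ _ hXY =>
  le_RMaxL (hexh _) fun _ hX₀ hX => RMaxL_le (hbdd _) hX₀ (hXY.trans hX)

theorem convexOn_RMaxL [AddCommGroup L] [Module ℝ L] [AddLeftMono L] [PosSMulMono ℝ L]
    (hexh : ∀ X : L, ∃ X₀ ∈ C, X ≤ X₀)
    (hbdd : ∀ X : L, BddBelow {y : ℝ | ∃ X₀ ∈ C, X ≤ X₀ ∧ H X₀ = y}) (hH : ConvexOn ℝ C H) :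
    ConvexOn ℝ univ (RMaxL C H) := by
  refine ⟨convex_univ, fun Y _ Z _ a b ha hb hab => le_of_forall_pos_le_add fun ε hε => ?_⟩
  obtain ⟨Y₀, hY₀, hY, hHY⟩ := exists_lt_of_RMaxL_lt (hexh Y) (lt_add_of_pos_right _ hε)
  obtain ⟨Z₀, hZ₀, hZ, hHZ⟩ := exists_lt_of_RMaxL_lt (hexh Z) (lt_add_of_pos_right _ hε)
  calc RMaxL C H (a • Y + b • Z)
      ≤ H (a • Y₀ + b • Z₀) := RMaxL_le (hbdd _) (hH.1 hY₀ hZ₀ ha hb hab)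
          (add_le_add (smul_le_smul_of_nonneg_left hY ha) (smul_le_smul_of_nonneg_left hZ hb))
    _ ≤ a • H Y₀ + b • H Z₀ := hH.2 hY₀ hZ₀ ha hb hab
    _ ≤ a • (RMaxL C H Y + ε) + b • (RMaxL C H Z + ε) := by gcongr
    _ = a • RMaxL C H Y + b • RMaxL C H Z + ε := by
      simp only [smul_eq_mul]; linear_combination ε * hab

end RMax

section HStar

variable {L : Type*} [AddCommGroup L] [Module ℝ L] {C : Set L} {H : L → ℝ} {μ : L →ₗ[ℝ] ℝ}

theorem coe_sub_le_HstarL {X : L} (hX : X ∈ C) : ((μ X - H X : ℝ) : EReal) ≤ HstarL C H μ :=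
  le_iSup₂ (f := fun X (_ : X ∈ C) => ((μ X - H X : ℝ) : EReal)) X hX

theorem HstarL_le_coe_iff {t : ℝ} : HstarL C H μ ≤ t ↔ ∀ X ∈ C, μ X - H X ≤ t := by
  simp only [HstarL, iSup₂_le_iff, EReal.coe_le_coe_iff]

theorem HstarL_ne_bot (hC : C.Nonempty) : HstarL C H μ ≠ ⊥ :=
  let ⟨_, hX⟩ := hC
  ne_bot_of_le_ne_bot (EReal.coe_ne_bot _) (coe_sub_le_HstarL hX)

theorem apply_eq_of_HstarL_lt_top {M : AddSubgroup L} (hMC : (M : Set L) ⊆ C)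
    (hadd : ∀ m₁ ∈ M, ∀ m₂ ∈ M, H (m₁ + m₂) = H m₁ + H m₂) (h : HstarL C H μ < ⊤) {m : L}
    (hm : m ∈ M) : μ m = H m := by
  obtain ⟨t, ht, -⟩ := EReal.lt_iff_exists_real_btwn.1 h
  let g : M →+ ℝ := AddMonoidHom.mk' (fun m => μ m - H m) fun a b => by
    simp only [AddSubgroup.coe_add, map_add, hadd a a.2 b b.2]; ring
  have hg : BddAbove (range g) := by
    refine ⟨t, ?_⟩
    rintro _ ⟨m, rfl⟩
    exact HstarL_le_coe_iff.1 ht.le m (hMC m.2)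
  have hgm := DFunLike.congr_fun (g.eq_zero_of_bddAbove_range hg) ⟨m, hm⟩
  simp only [AddMonoidHom.mk'_apply, AddMonoidHom.zero_apply, g] at hgm
  linarith

variable [Preorder L] {X : L}

theorem coe_sub_RMaxL_le_HstarL (hexh : ∃ X₀ ∈ C, X ≤ X₀) (hμ : Monotone μ) :
    ((μ X - RMaxL C H X : ℝ) : EReal) ≤ HstarL C H μ := by
  cases h : HstarL C H μ with
  | bot => exact absurd h (HstarL_ne_bot ⟨_, hexh.choose_spec.1⟩)
  | top => exact le_top
  | coe t =>
    have hle : μ X - t ≤ RMaxL C H X := le_RMaxL hexh fun X₀ hX₀ hX => by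
      linarith [hμ hX, HstarL_le_coe_iff.1 h.le X₀ hX₀]
    exact EReal.coe_le_coe_iff.2 (by linarith)

theorem sub_HstarL_le_RMaxL (hexh : ∃ X₀ ∈ C, X ≤ X₀) (hμ : Monotone μ) :
    (μ X : EReal) - HstarL C H μ ≤ RMaxL C H X := by
  refine EReal.sub_le_of_le_add' <| (EReal.sub_le_iff_le_add (.inl (EReal.coe_ne_bot _))
    (.inl (EReal.coe_ne_top _))).1 ?_
  exact_mod_cast coe_sub_RMaxL_le_HstarL hexh hμ

theorem HstarL_eq_iSup_sub_RMaxL (hexh : ∀ X : L, ∃ X₀ ∈ C, X ≤ X₀)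
    (hbdd : ∀ X : L, BddBelow {y : ℝ | ∃ X₀ ∈ C, X ≤ X₀ ∧ H X₀ = y}) (hμ : Monotone μ) :
    HstarL C H μ = ⨆ X, ((μ X - RMaxL C H X : ℝ) : EReal) := by
  refine le_antisymm (iSup₂_le fun X hX => ?_)
    (iSup_le fun X => coe_sub_RMaxL_le_HstarL (hexh X) hμ)
  refine le_trans ?_ (le_iSup (fun X => ((μ X - RMaxL C H X : ℝ) : EReal)) X)
  exact EReal.coe_le_coe_iff.2 (sub_le_sub_left (RMaxL_le (hbdd X) hX le_rfl) _)

theorem RMaxL_eq_sub_HstarL_of_subgradient (hexh : ∀ X : L, ∃ X₀ ∈ C, X ≤ X₀)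
    (hbdd : ∀ X : L, BddBelow {y : ℝ | ∃ X₀ ∈ C, X ≤ X₀ ∧ H X₀ = y}) (hμ : Monotone μ)
    (hsub : ∀ Y, RMaxL C H X + μ (Y - X) ≤ RMaxL C H Y) :
    (RMaxL C H X : EReal) = μ X - HstarL C H μ := by
  have hHstar : HstarL C H μ = ((μ X - RMaxL C H X : ℝ) : EReal) := by
    rw [HstarL_eq_iSup_sub_RMaxL hexh hbdd hμ]
    refine le_antisymm (iSup_le fun Y => EReal.coe_le_coe_iff.2 ?_) (le_iSup_of_le X le_rfl)
    linarith [hsub Y, map_sub μ Y X]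
  rw [hHstar, ← EReal.coe_sub, sub_sub_cancel]

end HStar

theorem abstract_convex_dual_representation_general {L : Type*}
    [AddCommGroup L] [Module ℝ L] [Preorder L]
    (hordadd : ∀ X Y Z : L, X ≤ Y → X + Z ≤ Y + Z)
    (hordsmul : ∀ X : L, 0 ≤ X → ∀ c : ℝ, 0 ≤ c → 0 ≤ c • X)
    (M C : Submodule ℝ L) (hMC : M ≤ C)
    (hexh : ∀ X : L, ∃ X₀ ∈ C, X ≤ X₀)
    (H : L → ℝ)
    (hconv : ∀ X ∈ C, ∀ Y ∈ C, ∀ l : ℝ, 0 ≤ l → l ≤ 1 →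
      H (l • X + (1 - l) • Y) ≤ l * H X + (1 - l) * H Y)
    (hP1 : ∀ X ∈ C, ∀ m ∈ M, H (X + m) = H X + H m)
    (hP3 : ∀ X : L, BddBelow {y : ℝ | ∃ X₀ ∈ C, X ≤ X₀ ∧ H X₀ = y}) :
    -- (a) dual representation of `R_Max` with attained maximum
    (∀ X : L,
      (∃ μ : L →ₗ[ℝ] ℝ, Monotone μ ∧
        ((RMaxL (C : Set L) H X : ℝ) : EReal) = (μ X : ℝ) - HstarL (C : Set L) H μ) ∧
      (∀ μ : L →ₗ[ℝ] ℝ, Monotone μ →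
        ((μ X : ℝ) : EReal) - HstarL (C : Set L) H μ ≤
          ((RMaxL (C : Set L) H X : ℝ) : EReal))) ∧
    -- (b) `H*` is the penalty of `R_Max`
    (∀ μ : L →ₗ[ℝ] ℝ, Monotone μ →
      HstarL (C : Set L) H μ = ⨆ X : L, ((μ X - RMaxL (C : Set L) H X : ℝ) : EReal)) ∧
    -- (c) finite penalty forces consistency with `H` on `M`
    (∀ μ : L →ₗ[ℝ] ℝ, Monotone μ → HstarL (C : Set L) H μ < ⊤ →
      ∀ m ∈ M, μ m = H m) := by
  have : AddLeftMono L := ⟨fun Z X Y h => by simpa only [add_comm Z] using hordadd X Y Z h⟩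
  have : PosSMulMono ℝ L := posSMulMono_of_smul_nonneg hordsmul
  have hH : ConvexOn ℝ C H := ⟨C.convex, fun X hX Y hY a b ha hb hab => by
    obtain rfl := eq_sub_of_add_eq' hab
    exact hconv X hX Y hY a ha (by linarith)⟩
  refine ⟨fun X => ⟨?_, fun μ hμ => sub_HstarL_le_RMaxL (hexh X) hμ⟩,
    fun μ hμ => HstarL_eq_iSup_sub_RMaxL hexh hP3 hμ,
    fun μ _ hμ m hm => apply_eq_of_HstarL_lt_top (M := M.toAddSubgroup) hMC
      (fun a ha b hb => hP1 a (hMC ha) b hb) hμ hm⟩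
  obtain ⟨μ, hμ⟩ := (convexOn_RMaxL hexh hP3 hH).exists_subgradient X
  have hμ_mono := μ.monotone_of_subgradient_of_monotone (monotone_RMaxL hexh hP3) hμ
  exact ⟨μ, hμ_mono, RMaxL_eq_sub_HstarL_of_subgradient hexh hP3 hμ_mono hμ⟩

/-- dual representation of the maximal risk measure of a convex
premium principle on a vector space `L` with a vector preorder, via monotone
linear functionals `μ : L → ℝ`. -/
theorem abstract_convex_dual_representation {L : Type*}
    [AddCommGroup L] [Module ℝ L] [Preorder L]
    (hordadd : ∀ X Y Z : L, X ≤ Y → X + Z ≤ Y + Z)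
    (hordsmul : ∀ X : L, 0 ≤ X → ∀ c : ℝ, 0 ≤ c → 0 ≤ c • X)
    (M C : Submodule ℝ L) (hMC : M ≤ C)
    (hexh : ∀ X : L, ∃ X₀ ∈ C, X ≤ X₀)
    (H : L → ℝ)
    (hconv : ∀ X ∈ C, ∀ Y ∈ C, ∀ l : ℝ, 0 ≤ l → l ≤ 1 →
      H (l • X + (1 - l) • Y) ≤ l * H X + (1 - l) * H Y)
    (hP1 : ∀ X ∈ C, ∀ m ∈ M, H (X + m) = H X + H m)
    (hP20 : H 0 = 0) (hP2 : ∀ X ∈ C, 0 ≤ X → 0 ≤ H X)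
    (hP3 : ∀ X : L, BddBelow {y : ℝ | ∃ X₀ ∈ C, X ≤ X₀ ∧ H X₀ = y}) :
    -- (a) dual representation of `R_Max` with attained maximum
    (∀ X : L,
      (∃ μ : L →ₗ[ℝ] ℝ, Monotone μ ∧
        ((RMaxL (C : Set L) H X : ℝ) : EReal) = (μ X : ℝ) - HstarL (C : Set L) H μ) ∧
      (∀ μ : L →ₗ[ℝ] ℝ, Monotone μ →
        ((μ X : ℝ) : EReal) - HstarL (C : Set L) H μ ≤
          ((RMaxL (C : Set L) H X : ℝ) : EReal))) ∧
    -- (b) `H*` is the penalty of `R_Max`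
    (∀ μ : L →ₗ[ℝ] ℝ, Monotone μ →
      HstarL (C : Set L) H μ = ⨆ X : L, ((μ X - RMaxL (C : Set L) H X : ℝ) : EReal)) ∧
    -- (c) finite penalty forces consistency with `H` on `M`
    (∀ μ : L →ₗ[ℝ] ℝ, Monotone μ → HstarL (C : Set L) H μ < ⊤ →
      ∀ m ∈ M, μ m = H m) :=
  abstract_convex_dual_representation_general hordadd hordsmul M C hMC hexh H hconv hP1 hP3
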